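/- Let p, p' be rank-k orthogonal projections on R^d with ‖p − p'‖_F ≤ ϱ, let x_1,...,x_m ∈ R^d and 0 < ε < 1, and suppose (1−ε)‖x_i−x_j‖² ≤ (d/k)‖p(x_i)−p(x_j)‖² ≤ (1+ε)‖x_i−x_j‖² for all i < j. Then for all i < j, (1−δ)‖x_i−x_j‖² ≤ (d/k)‖p'(x_i)−p'(x_j)‖² ≤ (1+δ)‖x_i−x_j‖², where δ = ε + 2ϱ√((1+ε)d/k) + (d/k)ϱ². -/

import Mathlib

open Finset

noncomputable def sqnorm {d : ℕ} (v : Fin d → ℝ) : ℝ := ∑ i, (v i) ^ 2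

/-- Frobenius norm of a matrix. -/
noncomputable def frob {d : ℕ} (A : Matrix (Fin d) (Fin d) ℝ) : ℝ :=
  Real.sqrt (∑ i, ∑ j, (A i j) ^ 2)

lemma sqnorm_nonneg {d : ℕ} (v : Fin d → ℝ) : 0 ≤ sqnorm v :=
  Finset.sum_nonneg fun i _ => sq_nonneg _

lemma sqrt_sqnorm_eq_norm {d : ℕ} (v : Fin d → ℝ) :
    Real.sqrt (sqnorm v) = ‖(WithLp.equiv 2 (Fin d → ℝ)).symm v‖ := by
  rw [EuclideanSpace.norm_eq]
  congr 1
  simp [sqnorm, Real.norm_eq_abs, sq_abs]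

lemma sqrt_triangle {d : ℕ} (u v : Fin d → ℝ) :
    Real.sqrt (sqnorm (u + v)) ≤ Real.sqrt (sqnorm u) + Real.sqrt (sqnorm v) := by
  rw [sqrt_sqnorm_eq_norm, sqrt_sqnorm_eq_norm, sqrt_sqnorm_eq_norm]
  exact norm_add_le _ _

lemma sqnorm_mulVec_le {d : ℕ} (A : Matrix (Fin d) (Fin d) ℝ) (y : Fin d → ℝ) :
    sqnorm (A.mulVec y) ≤ (∑ i, ∑ j, (A i j) ^ 2) * sqnorm y := by
  unfold sqnorm Matrix.mulVec
  rw [Finset.sum_mul]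
  refine Finset.sum_le_sum fun i _ => ?_
  calc (dotProduct (A i) y) ^ 2 = (∑ j, A i j * y j)^2 := by rfl
    _ ≤ (∑ j, (A i j)^2) * (∑ j, (y j)^2) := by
        have h := Finset.sum_mul_sq_le_sq_mul_sq Finset.univ (fun j => A i j) y
        simpa [sq] using h

set_option maxHeartbeats 1000000 in
/-- Transfer of the JL near-isometry property from `p` to a nearby projector
`p'`, with loss `δ = ε + 2ϱ√((1+ε)d/k) + (d/k)ϱ²`. -/
theorem near_isometry_transfer (d m k : ℕ) (hk : 0 < k)
    (p p' : Matrix (Fin d) (Fin d) ℝ)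
    (hp : p * p = p ∧ p.transpose = p ∧ p.rank = k)
    (hp' : p' * p' = p' ∧ p'.transpose = p' ∧ p'.rank = k)
    (ϱ : ℝ) (hϱ : 0 ≤ ϱ) (hF : frob (p - p') ≤ ϱ)
    (ε : ℝ) (hε0 : 0 < ε) (hε1 : ε < 1) (x : Fin m → (Fin d → ℝ))
    (hJL : ∀ i j : Fin m, i < j →
      (1 - ε) * sqnorm (x i - x j) ≤
          ((d : ℝ) / k) * sqnorm (p.mulVec (x i) - p.mulVec (x j)) ∧
        ((d : ℝ) / k) * sqnorm (p.mulVec (x i) - p.mulVec (x j)) ≤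
          (1 + ε) * sqnorm (x i - x j)) :
    ∀ i j : Fin m, i < j →
      (1 - (ε + 2 * ϱ * Real.sqrt ((1 + ε) * d / k) + ((d : ℝ) / k) * ϱ ^ 2)) *
          sqnorm (x i - x j) ≤
        ((d : ℝ) / k) * sqnorm (p'.mulVec (x i) - p'.mulVec (x j)) ∧
      ((d : ℝ) / k) * sqnorm (p'.mulVec (x i) - p'.mulVec (x j)) ≤
        (1 + (ε + 2 * ϱ * Real.sqrt ((1 + ε) * d / k) + ((d : ℝ) / k) * ϱ ^ 2)) *
          sqnorm (x i - x j) := by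
  intro i j hij
  obtain ⟨h1, h2⟩ := hJL i j hij
  set y : Fin d → ℝ := x i - x j with hy
  have hpy : p.mulVec (x i) - p.mulVec (x j) = p.mulVec y := by
    rw [hy, Matrix.mulVec_sub]
  have hpy' : p'.mulVec (x i) - p'.mulVec (x j) = p'.mulVec y := by
    rw [hy, Matrix.mulVec_sub]
  rw [hpy] at h1 h2
  rw [hpy']
  set c : ℝ := (d : ℝ) / k with hc
  have hc0 : 0 ≤ c := by positivity
  set N : ℝ := Real.sqrt (sqnorm y) with hN
  set a : ℝ := Real.sqrt (sqnorm (p.mulVec y)) with ha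
  set b : ℝ := Real.sqrt (sqnorm (p'.mulVec y)) with hb
  have hN0 : 0 ≤ N := Real.sqrt_nonneg _
  have ha0 : 0 ≤ a := Real.sqrt_nonneg _
  have hb0 : 0 ≤ b := Real.sqrt_nonneg _
  have hN2 : N ^ 2 = sqnorm y := Real.sq_sqrt (sqnorm_nonneg _)
  have ha2 : a ^ 2 = sqnorm (p.mulVec y) := Real.sq_sqrt (sqnorm_nonneg _)
  have hb2 : b ^ 2 = sqnorm (p'.mulVec y) := Real.sq_sqrt (sqnorm_nonneg _)
  -- the perturbation bound : |a - b| ≤ ϱ * N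
  have hfrob_eq : (∑ i, ∑ j, ((p' - p) i j) ^ 2) = (∑ i, ∑ j, ((p - p') i j) ^ 2) := by
    refine Finset.sum_congr rfl fun i _ => Finset.sum_congr rfl fun j _ => ?_
    simp [Matrix.sub_apply]; ring
  have hdiff : Real.sqrt (sqnorm ((p' - p).mulVec y)) ≤ ϱ * N := by
    have h1' : sqnorm ((p' - p).mulVec y) ≤ (∑ i, ∑ j, ((p' - p) i j) ^ 2) * sqnorm y :=
      sqnorm_mulVec_le _ _
    have h2' : Real.sqrt ((∑ i, ∑ j, ((p' - p) i j) ^ 2) * sqnorm y)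
        = frob (p - p') * N := by
      rw [Real.sqrt_mul' _ (sqnorm_nonneg y), hfrob_eq, hN]; rfl
    calc Real.sqrt (sqnorm ((p' - p).mulVec y)) ≤ _ := Real.sqrt_le_sqrt h1'
      _ = frob (p - p') * N := h2'
      _ ≤ ϱ * N := by
          exact mul_le_mul_of_nonneg_right hF hN0
  have hba : b ≤ a + ϱ * N := by
    have : p'.mulVec y = p.mulVec y + (p' - p).mulVec y := by
      rw [Matrix.sub_mulVec]; abel
    calc b = Real.sqrt (sqnorm (p.mulVec y + (p' - p).mulVec y)) := by rw [hb, this]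
      _ ≤ a + Real.sqrt (sqnorm ((p' - p).mulVec y)) := sqrt_triangle _ _
      _ ≤ a + ϱ * N := by linarith
  have hab : a ≤ b + ϱ * N := by
    have heq : p.mulVec y = p'.mulVec y + (p - p').mulVec y := by
      rw [Matrix.sub_mulVec]; abel
    have hdiff2 : Real.sqrt (sqnorm ((p - p').mulVec y)) ≤ ϱ * N := by
      have h1' : sqnorm ((p - p').mulVec y) ≤ (∑ i, ∑ j, ((p - p') i j) ^ 2) * sqnorm y :=
        sqnorm_mulVec_le _ _
      calc Real.sqrt (sqnorm ((p - p').mulVec y)) ≤ _ := Real.sqrt_le_sqrt h1'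
        _ = frob (p - p') * N := by rw [Real.sqrt_mul' _ (sqnorm_nonneg y), hN]; rfl
        _ ≤ ϱ * N := mul_le_mul_of_nonneg_right hF hN0
    calc a = Real.sqrt (sqnorm (p'.mulVec y + (p - p').mulVec y)) := by rw [ha, heq]
      _ ≤ b + Real.sqrt (sqnorm ((p - p').mulVec y)) := sqrt_triangle _ _
      _ ≤ b + ϱ * N := by linarith
  -- set up sqrt quantities
  set sc : ℝ := Real.sqrt c with hsc
  set se : ℝ := Real.sqrt (1 + ε) with hse
  have hsc0 : 0 ≤ sc := Real.sqrt_nonneg _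
  have hse0 : 0 ≤ se := Real.sqrt_nonneg _
  have hsc2 : sc ^ 2 = c := Real.sq_sqrt hc0
  have hse2 : se ^ 2 = 1 + ε := Real.sq_sqrt (by linarith)
  have hS : Real.sqrt ((1 + ε) * d / k) = se * sc := by
    rw [hse, hsc, hc, ← Real.sqrt_mul (by linarith), mul_div_assoc]
  rw [hS]
  -- key: sc * a ≤ se * N
  have hkey : sc * a ≤ se * N := by
    have h : (sc * a) ^ 2 ≤ (se * N) ^ 2 := by
      rw [mul_pow, mul_pow, hsc2, hse2, ha2, hN2]; exact h2
    have h' := Real.sqrt_le_sqrt h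
    rwa [Real.sqrt_sq (by positivity), Real.sqrt_sq (by positivity)] at h'
  rw [← hN2, ← ha2] at h1 h2
  have hcross : 2 * (ϱ * N) * (c * a) ≤ 2 * (ϱ * N) * (sc * se * N) := by
    have h := mul_le_mul_of_nonneg_left hkey hsc0
    have h2' : c * a ≤ sc * se * N := by
      calc c * a = sc ^ 2 * a := by rw [hsc2]
        _ = sc * (sc * a) := by ring
        _ ≤ sc * (se * N) := h
        _ = sc * se * N := by ring
    exact mul_le_mul_of_nonneg_left h2' (by positivity)
  constructor
  · -- lower bound
    rw [← hN2, ← hb2]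
    rcases le_or_gt a (ϱ * N) with hcase | hcase
    · -- small a: LHS is nonpositive
      have h3 : c * a ^ 2 ≤ c * (ϱ * N) ^ 2 :=
        mul_le_mul_of_nonneg_left (by nlinarith) hc0
      nlinarith [mul_nonneg hc0 (sq_nonneg b),
        mul_nonneg (mul_nonneg hϱ hse0) (mul_nonneg hsc0 (sq_nonneg N))]
    · -- b ≥ a - ϱ N ≥ 0
      have hba' : a - ϱ * N ≤ b := by linarith
      have hbsq : (a - ϱ * N) ^ 2 ≤ b ^ 2 := by nlinarith
      nlinarith [mul_le_mul_of_nonneg_left hbsq hc0,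
        mul_nonneg hc0 (mul_nonneg (sq_nonneg ϱ) (sq_nonneg N))]
  · -- upper bound
    rw [← hN2, ← hb2]
    have hbsq : b ^ 2 ≤ (a + ϱ * N) ^ 2 := by nlinarith
    nlinarith [mul_le_mul_of_nonneg_left hbsq hc0,
      mul_nonneg hc0 (mul_nonneg (sq_nonneg ϱ) (sq_nonneg N))]
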